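/- Suppose L : ℝ^M × ℝ^M → ℝ is continuously differentiable, periodic in the sense that L(x+α, y+α) = L(x,y) for all α ∈ ℤ^M, and coercive: L(x,y) → +∞ as |x-y| → ∞. Then there exists a nondecreasing function b : ℝ≥0 → ℝ≥0 such that for all x, y ∈ ℝ^M, |∂_x L(x,y)|² ≤ b(|L(x,y)|). -/

import Mathlib

/-! The squared partial gradient `‖∂ₓL(x, y)‖²` is continuous and invariant under the diagonal
action of `ℤ^M`, so it is bounded on each strip `‖x - y‖ ≤ R`: modulo `ℤ^M` such a strip is the
compact set `[0, 1]^M × closedBall 0 R`. By coercivity each sublevel set `|L| ≤ s` lies in such a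
strip, and `b s` is the supremum of `‖∂ₓL‖²` over that sublevel set. -/

open Set

theorem exists_monotone_bound_of_bounded_on_sublevels {α : Type*} (f g : α → ℝ)
    (hbdd : ∀ s, ∃ C, ∀ a, f a ≤ s → g a ≤ C) :
    ∃ b : ℝ → ℝ, (∀ s, 0 ≤ b s) ∧ Monotone b ∧ ∀ a, g a ≤ b (f a) := by
  have hbdd' (s : ℝ) : BddAbove (insert 0 (g '' {a | f a ≤ s})) := by
    obtain ⟨C, hC⟩ := hbdd s
    exact (bddAbove_def.2 ⟨C, by rintro _ ⟨a, ha, rfl⟩; exact hC a ha⟩).insert 0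
  refine ⟨fun s => sSup (insert 0 (g '' {a | f a ≤ s})), fun s => ?_, fun s t hst => ?_,
    fun a => ?_⟩
  · exact le_csSup (hbdd' s) (mem_insert 0 _)
  · refine csSup_le_csSup (hbdd' t) (insert_nonempty 0 _) (insert_subset_insert ?_)
    exact image_mono fun a (ha : f a ≤ s) => ha.trans hst
  · exact le_csSup (hbdd' _) (mem_insert_of_mem 0 ⟨a, le_refl (f a), rfl⟩)

theorem exists_int_add_mem_Icc {ι : Type*} (x : ι → ℝ) :
    ∃ a : ι → ℤ, (x + fun i => (a i : ℝ)) ∈ Icc 0 1 := by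
  refine ⟨fun i => -⌊x i⌋, fun i => ?_, fun i => ?_⟩
  · simp [← sub_eq_add_neg]
  · simpa [← sub_eq_add_neg] using (Int.fract_lt_one (x i)).le

theorem exists_bound_on_strip_of_periodic {ι : Type*} [Fintype ι]
    {G : (ι → ℝ) → (ι → ℝ) → ℝ} (hG : Continuous fun p : (ι → ℝ) × (ι → ℝ) => G p.1 p.2)
    (hper : ∀ (x y : ι → ℝ) (a : ι → ℤ),
      G (x + fun i => (a i : ℝ)) (y + fun i => (a i : ℝ)) = G x y)
    (R : ℝ) : ∃ C, ∀ x y, ‖x - y‖ ≤ R → G x y ≤ C := by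
  set K := (fun q : (ι → ℝ) × (ι → ℝ) => (q.1, q.1 - q.2)) '' Icc 0 1 ×ˢ Metric.closedBall 0 R
  have hK : IsCompact K :=
    (isCompact_Icc.prod (isCompact_closedBall 0 R)).image (by fun_prop)
  obtain ⟨C, hC⟩ := hK.bddAbove_image hG.continuousOn
  refine ⟨C, fun x y hxy => ?_⟩
  obtain ⟨a, ha⟩ := exists_int_add_mem_Icc x
  set c : ι → ℝ := fun i => (a i : ℝ)
  have hmem : (x + c, y + c) ∈ K :=
    ⟨(x + c, x - y), ⟨ha, by simpa using hxy⟩, by simp [add_comm]⟩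
  rw [← hper x y a]
  exact hC ⟨_, hmem, rfl⟩

section PartialDerivative

variable {𝕜 E F G : Type*} [NontriviallyNormedField 𝕜] [NormedAddCommGroup E] [NormedSpace 𝕜 E]
  [NormedAddCommGroup G] [NormedSpace 𝕜 G]

theorem fderiv_partial_fst_eq_comp_inl [NormedAddCommGroup F] [NormedSpace 𝕜 F] {f : E → F → G}
    (hf : Differentiable 𝕜 fun p : E × F => f p.1 p.2) (x : E) (y : F) :
    fderiv 𝕜 (fun z => f z y) x
      = (fderiv 𝕜 (fun p : E × F => f p.1 p.2) (x, y)).comp (ContinuousLinearMap.inl 𝕜 E F) := by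
  have hinl : HasFDerivAt (fun z => (z, y)) (ContinuousLinearMap.inl 𝕜 E F) x :=
    hasFDerivAt_prodMk_left x y
  exact ((hf (x, y)).hasFDerivAt.comp x hinl).fderiv

theorem continuous_fderiv_partial_fst [NormedAddCommGroup F] [NormedSpace 𝕜 F] {f : E → F → G}
    (hf : ContDiff 𝕜 1 fun p : E × F => f p.1 p.2) :
    Continuous fun p : E × F => fderiv 𝕜 (fun z => f z p.2) p.1 := by
  simp only [fderiv_partial_fst_eq_comp_inl (hf.differentiable one_ne_zero)]
  exact (hf.continuous_fderiv one_ne_zero).clm_comp continuous_const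

theorem fderiv_partial_fst_add_add [Add F] {f : E → F → G} {c : E} {d : F}
    (hf : ∀ x y, f (x + c) (y + d) = f x y) (x : E) (y : F) :
    fderiv 𝕜 (fun z => f z (y + d)) (x + c) = fderiv 𝕜 (fun z => f z y) x := by
  rw [← fderiv_comp_add_right]
  simp only [hf]

end PartialDerivative

theorem gradient_bound_by_energy_general {M : ℕ}
    (L : (Fin M → ℝ) → (Fin M → ℝ) → ℝ)
    (hC1 : ContDiff ℝ 1 (fun p : (Fin M → ℝ) × (Fin M → ℝ) => L p.1 p.2))
    (hper : ∀ (x y : Fin M → ℝ) (a : Fin M → ℤ),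
      L (x + fun i => (a i : ℝ)) (y + fun i => (a i : ℝ)) = L x y)
    (hcoer : ∀ c : ℝ, ∃ R : ℝ, ∀ x y : Fin M → ℝ, R ≤ ‖x - y‖ → c ≤ L x y) :
    ∃ b : ℝ → ℝ, (∀ s, 0 ≤ s → 0 ≤ b s) ∧
      (∀ s t, 0 ≤ s → s ≤ t → b s ≤ b t) ∧
      ∀ x y : Fin M → ℝ, ‖fderiv ℝ (fun z => L z y) x‖ ^ 2 ≤ b |L x y| := by
  have hbdd (s : ℝ) : ∃ C, ∀ p : (Fin M → ℝ) × (Fin M → ℝ),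
      |L p.1 p.2| ≤ s → ‖fderiv ℝ (fun z => L z p.2) p.1‖ ^ 2 ≤ C := by
    obtain ⟨R, hR⟩ := hcoer (s + 1)
    obtain ⟨C, hC⟩ := exists_bound_on_strip_of_periodic (G := fun x y =>
      ‖fderiv ℝ (fun z => L z y) x‖ ^ 2) ((continuous_fderiv_partial_fst hC1).norm.pow 2)
      (fun x y a => by rw [fderiv_partial_fst_add_add (hper · · a)]) R
    refine ⟨C, fun ⟨x, y⟩ hxy => hC x y ?_⟩
    by_contra! hRxy
    linarith [hR x y hRxy.le, le_abs_self (L x y)]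
  obtain ⟨b, hb_nonneg, hb_mono, hb⟩ := exists_monotone_bound_of_bounded_on_sublevels _ _ hbdd
  exact ⟨b, fun s _ => hb_nonneg s, fun s t _ hst => hb_mono hst, fun x y => hb (x, y)⟩

/-- If L : ℝ^M × ℝ^M → ℝ is C¹, periodic (L(x+α,y+α) = L(x,y) for integer
vectors α) and coercive (L(x,y) → ∞ as |x-y| → ∞), then there is a
nondecreasing b : ℝ≥0 → ℝ≥0 with |∂_x L(x,y)|² ≤ b(|L(x,y)|). -/
theorem gradient_bound_by_energy {M : ℕ} (hM : 1 ≤ M)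
    (L : (Fin M → ℝ) → (Fin M → ℝ) → ℝ)
    (hC1 : ContDiff ℝ 1 (fun p : (Fin M → ℝ) × (Fin M → ℝ) => L p.1 p.2))
    (hper : ∀ (x y : Fin M → ℝ) (a : Fin M → ℤ),
      L (x + fun i => (a i : ℝ)) (y + fun i => (a i : ℝ)) = L x y)
    (hcoer : ∀ c : ℝ, ∃ R : ℝ, ∀ x y : Fin M → ℝ, R ≤ ‖x - y‖ → c ≤ L x y) :
    ∃ b : ℝ → ℝ, (∀ s, 0 ≤ s → 0 ≤ b s) ∧
      (∀ s t, 0 ≤ s → s ≤ t → b s ≤ b t) ∧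
      ∀ x y : Fin M → ℝ, ‖fderiv ℝ (fun z => L z y) x‖ ^ 2 ≤ b |L x y| :=
  gradient_bound_by_energy_general L hC1 hper hcoer
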